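/- Let (𝔘, G, α) be a C*-dynamical system, 𝔙 ⊆ 𝔘 a *-subalgebra (not necessarily closed), f: G → ℝ_{>0}, and ω a state such that for some net g^i, lim_i f(g^i)(ω(α_{g^i}(A)B) − ω(α_{g^i}A)ω(B)) = 0 for all A, B ∈ 𝔙. Then for every n ≥ 2, lim_i f(g^i) c_n(α_{g^i}A_1, A_2, ..., A_n) = 0 for all A_1,...,A_n ∈ 𝔙; that is, all higher classical cumulants decay at least at the rate 1/f. -/

import Mathlib

open scoped Classical
open Filter Topology

noncomputable section

/-- `π` is a set-partition of the finite set `S ⊆ ℕ`: a collection of nonempty subsets of `S`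
such that every element of `S` lies in exactly one of them. -/
def IsSetPartition (S : Finset ℕ) (π : Finset (Finset ℕ)) : Prop :=
  (∀ V ∈ π, V ⊆ S) ∧ (∀ V ∈ π, V.Nonempty) ∧ ∀ a ∈ S, ∃! V, V ∈ π ∧ a ∈ V

/-- The finset of all set-partitions of `S`. -/
def setPartitions (S : Finset ℕ) : Finset (Finset (Finset ℕ)) :=
  S.powerset.powerset.filter (IsSetPartition S)

/-- A family of blocks is non-crossing if there are no `a < b < c < d` with `a, c` in one
block and `b, d` in a different block. -/
def IsNonCrossing (π : Finset (Finset ℕ)) : Prop :=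
  ¬ ∃ a b c d : ℕ, a < b ∧ b < c ∧ c < d ∧
      ∃ V ∈ π, ∃ W ∈ π, V ≠ W ∧ a ∈ V ∧ c ∈ V ∧ b ∈ W ∧ d ∈ W

/-- The finset of all non-crossing partitions of `S`. -/
def ncPartitions (S : Finset ℕ) : Finset (Finset (Finset ℕ)) :=
  (setPartitions S).filter IsNonCrossing

variable {𝔘 : Type*}


/-- The ordered list `A_{i_1}, …, A_{i_s}` of observables indexed by `V = {i_1 < ⋯ < i_s}`. -/
def blockList (A : ℕ → 𝔘) (V : Finset ℕ) : List 𝔘 :=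
  (V.sort (· ≤ ·)).map A

/-- The ordered product `A_{i_1} ⋯ A_{i_s}` over the block `V = {i_1 < ⋯ < i_s}`. -/
def blockProd [Monoid 𝔘] (A : ℕ → 𝔘) (V : Finset ℕ) : 𝔘 :=
  (blockList A V).prod

/-- The joint classical cumulant of `ω` of the observables `A_i`, `i ∈ S` (order preserved):
`c(S) = ∑_{π ∈ P(S)} (-1)^{|π|-1}(|π|-1)! ∏_{V ∈ π} ω(∏_{i ∈ V} A_i)`. -/
def cumulant [Monoid 𝔘] (ω : 𝔘 → ℂ) (A : ℕ → 𝔘) (S : Finset ℕ) : ℂ :=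
  ∑ π ∈ setPartitions S,
    (-1 : ℂ) ^ (π.card - 1) * ((π.card - 1).factorial : ℂ) * ∏ V ∈ π, ω (blockProd A V)

/-- `κ` (as a function of the ordered list of observables) is the family of free cumulants of
`ω`: it satisfies the moments-to-free-cumulants formula over non-crossing partitions. -/
def IsFreeCumulantFamily [Monoid 𝔘] (ω : 𝔘 → ℂ) (κ : List 𝔘 → ℂ) : Prop :=
  ∀ (A : ℕ → 𝔘) (S : Finset ℕ), S.Nonempty →
    ω (blockProd A S) = ∑ π ∈ ncPartitions S, ∏ V ∈ π, κ (blockList A V)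

/-- A state on a unital C*-algebra: a positive unital linear functional. -/
structure IsState [NormedRing 𝔘] [StarRing 𝔘] [NormedAlgebra ℂ 𝔘] (ω : 𝔘 →ₗ[ℂ] ℂ) : Prop where
  unital : ω 1 = 1
  positive : ∀ a : 𝔘, 0 ≤ (ω (star a * a)).re ∧ (ω (star a * a)).im = 0

/-- `α` is a representation of the group `G` by *-automorphisms. -/
def IsStarAutoRep {G : Type*} [Monoid G] [Ring 𝔘] [Algebra ℂ 𝔘] [StarRing 𝔘]
    (α : G → 𝔘 ≃⋆ₐ[ℂ] 𝔘) : Prop :=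
  ∀ (g h : G) (x : 𝔘), α (g * h) x = α g (α h x)

/-!
Write `X = α_g A₁`. In every term of the moments-to-cumulants expansion of
`c_n(X, A₂, …, Aₙ)` the observable `X` only enters through the factor `ω(X B)`, where `B` is the
ordered product of the other observables in the block of `1`. Replacing `X` by `1` gives a
cumulant with a constant entry, which vanishes for `n ≥ 2`: grouping the partitions of `{1, …, n}`
by the partition with `k + 1` blocks they induce on `{2, …, n}`, the element `1` either forms a
new block (weight `(-1)^(k+1) (k+1)!`) or joins one of the `k + 1` blocks (weight `(-1)^k k!`
each). Subtracting `ω(X)` times this vanishing cumulant writes `c_n` as a fixed linear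
combination of the covariances `ω(X B) - ω(X) ω(B)` with `B ∈ 𝔙`, each of which is `o(1/f)`.
-/

open Finset Function

lemma mem_setPartitions {S : Finset ℕ} {π : Finset (Finset ℕ)} :
    π ∈ setPartitions S ↔ IsSetPartition S π := by
  simp only [setPartitions, mem_filter, mem_powerset, and_iff_right_iff_imp]
  exact fun h V hV => mem_powerset.2 (h.1 V hV)

namespace IsSetPartition

variable {S : Finset ℕ} {π : Finset (Finset ℕ)}

lemma eq_of_mem_of_mem (hπ : IsSetPartition S π) {a : ℕ} {V W : Finset ℕ} (hV : V ∈ π)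
    (hW : W ∈ π) (haV : a ∈ V) (haW : a ∈ W) : V = W :=
  (hπ.2.2 a (hπ.1 V hV haV)).unique ⟨hV, haV⟩ ⟨hW, haW⟩

lemma erase (hπ : IsSetPartition S π) {V : Finset ℕ} (hV : V ∈ π) :
    IsSetPartition (S \ V) (π.erase V) := by
  refine ⟨fun W hW b hbW => ?_, fun W hW => hπ.2.1 W (mem_of_mem_erase hW), fun b hb => ?_⟩
  · refine mem_sdiff.2 ⟨hπ.1 W (mem_of_mem_erase hW) hbW, fun hbV => ?_⟩
    exact (mem_erase.1 hW).1 (hπ.eq_of_mem_of_mem (mem_of_mem_erase hW) hV hbW hbV)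
  · obtain ⟨hbS, hbV⟩ := mem_sdiff.1 hb
    obtain ⟨U, ⟨hU, hbU⟩, huniq⟩ := hπ.2.2 b hbS
    refine ⟨U, ⟨mem_erase.2 ⟨fun h => hbV (h ▸ hbU), hU⟩, hbU⟩, ?_⟩
    exact fun W ⟨hW, hbW⟩ => huniq W ⟨mem_of_mem_erase hW, hbW⟩

lemma insert (hπ : IsSetPartition S π) {W : Finset ℕ} (hW : W.Nonempty) (hdisj : Disjoint S W) :
    IsSetPartition (S ∪ W) (insert W π) := by
  refine ⟨fun U hU => ?_, fun U hU => ?_, fun b hb => ?_⟩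
  · rcases mem_insert.1 hU with rfl | hU
    · exact subset_union_right
    · exact (hπ.1 U hU).trans subset_union_left
  · rcases mem_insert.1 hU with rfl | hU
    exacts [hW, hπ.2.1 U hU]
  · rcases mem_union.1 hb with hbS | hbW
    · obtain ⟨U, ⟨hU, hbU⟩, huniq⟩ := hπ.2.2 b hbS
      refine ⟨U, ⟨mem_insert_of_mem hU, hbU⟩, fun U' ⟨hU', hbU'⟩ => ?_⟩
      rcases mem_insert.1 hU' with rfl | hU'
      exacts [absurd hbU' (disjoint_left.1 hdisj hbS), huniq U' ⟨hU', hbU'⟩]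
    · refine ⟨W, ⟨mem_insert_self W π, hbW⟩, fun U ⟨hU, hbU⟩ => ?_⟩
      rcases mem_insert.1 hU with rfl | hU
      exacts [rfl, absurd hbW (disjoint_left.1 hdisj (hπ.1 U hU hbU))]

end IsSetPartition

def eraseFromBlocks (a : ℕ) (π : Finset (Finset ℕ)) : Finset (Finset ℕ) :=
  (π.image (·.erase a)).erase ∅

lemma IsSetPartition.eraseFromBlocks {S : Finset ℕ} {π : Finset (Finset ℕ)}
    (hπ : IsSetPartition S π) (a : ℕ) : IsSetPartition (S.erase a) (eraseFromBlocks a π) := by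
  refine ⟨fun W hW => ?_, fun W hW => nonempty_iff_ne_empty.2 (mem_erase.1 hW).1, fun b hb => ?_⟩
  · obtain ⟨V, hV, rfl⟩ := mem_image.1 (mem_of_mem_erase hW)
    exact erase_subset_erase a (hπ.1 V hV)
  · obtain ⟨hba, hbS⟩ := mem_erase.1 hb
    obtain ⟨V, ⟨hV, hbV⟩, huniq⟩ := hπ.2.2 b hbS
    have hbV' : b ∈ V.erase a := mem_erase.2 ⟨hba, hbV⟩
    refine ⟨V.erase a, ⟨mem_erase.2 ⟨ne_empty_of_mem hbV', mem_image_of_mem _ hV⟩, hbV'⟩, ?_⟩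
    rintro W ⟨hW, hbW⟩
    obtain ⟨V', hV', rfl⟩ := mem_image.1 (mem_of_mem_erase hW)
    rw [huniq V' ⟨hV', mem_of_mem_erase hbW⟩]

lemma eraseFromBlocks_insert {a : ℕ} {ρ : Finset (Finset ℕ)} (haρ : ∀ V ∈ ρ, a ∉ V)
    (W : Finset ℕ) : eraseFromBlocks a (insert W ρ) = (insert (W.erase a) ρ).erase ∅ := by
  rw [eraseFromBlocks, image_insert, image_congr fun V hV => erase_eq_of_notMem (haρ V hV),
    image_id']

lemma filter_eraseFromBlocks_eq {S : Finset ℕ} {a : ℕ} (ha : a ∈ S) {σ : Finset (Finset ℕ)}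
    (hσ : IsSetPartition (S.erase a) σ) :
    (setPartitions S).filter (eraseFromBlocks a · = σ) =
      insert (insert {a} σ) (σ.image fun V => insert (insert a V) (σ.erase V)) := by
  have haσ : ∀ V ∈ σ, a ∉ V := fun V hV haV => notMem_erase a S (hσ.1 V hV haV)
  have hσ0 : ∅ ∉ σ := fun h => not_nonempty_empty (hσ.2.1 ∅ h)
  ext π
  simp only [mem_filter, mem_insert, mem_image, mem_setPartitions]
  constructor
  · rintro ⟨hπ, hπσ⟩
    obtain ⟨V₀, ⟨hV₀, haV₀⟩, -⟩ := hπ.2.2 a ha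
    set ρ := π.erase V₀
    have haρ : ∀ V ∈ ρ, a ∉ V := fun V hV haV =>
      (mem_erase.1 hV).1 (hπ.eq_of_mem_of_mem (mem_of_mem_erase hV) hV₀ haV haV₀)
    have hρ0 : ∅ ∉ ρ := fun h => not_nonempty_empty (hπ.2.1 ∅ (mem_of_mem_erase h))
    have hσρ : σ = (insert (V₀.erase a) ρ).erase ∅ := by
      rw [← hπσ, ← eraseFromBlocks_insert haρ, insert_erase hV₀]
    rcases (V₀.erase a).eq_empty_or_nonempty with hV | hV
    · have hsingle : V₀ = {a} :=
        ((erase_eq_empty_iff _ _).1 hV).resolve_left (ne_empty_of_mem haV₀)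
      left
      rw [hσρ, hV, erase_insert hρ0, ← hsingle, insert_erase hV₀]
    · have hVρ : V₀.erase a ∉ ρ := fun h => by
        obtain ⟨b, hb⟩ := hV
        have := hπ.eq_of_mem_of_mem (mem_of_mem_erase h) hV₀ hb (mem_of_mem_erase hb)
        exact notMem_erase a V₀ (by rwa [this])
      have hσ : σ = insert (V₀.erase a) ρ := by
        rw [hσρ, erase_eq_of_notMem]
        intro h
        rcases mem_insert.1 h with h | h
        exacts [hV.ne_empty h.symm, hρ0 h]
      right
      refine ⟨V₀.erase a, hσ ▸ mem_insert_self _ _, ?_⟩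
      rw [hσ, erase_insert hVρ, insert_erase haV₀, insert_erase hV₀]
  · rintro (rfl | ⟨V, hV, rfl⟩)
    · refine ⟨?_, ?_⟩
      · simpa [insert_erase ha] using hσ.insert (singleton_nonempty a) (by simp)
      · rw [eraseFromBlocks_insert haσ, erase_singleton, erase_insert hσ0]
    · refine ⟨?_, ?_⟩
      · have hS : (S.erase a \ V) ∪ insert a V = S := by
          rw [union_comm, insert_union, union_sdiff_of_subset (hσ.1 V hV), insert_erase ha]
        have hdisj : Disjoint (S.erase a \ V) (insert a V) := by
          rw [disjoint_insert_right]
          exact ⟨fun h => notMem_erase a S (mem_sdiff.1 h).1, sdiff_disjoint⟩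
        simpa only [hS] using (hσ.erase hV).insert (insert_nonempty a V) hdisj
      · rw [eraseFromBlocks_insert fun W hW => haσ W (mem_of_mem_erase hW),
          erase_insert (haσ V hV), insert_erase hV,
          erase_eq_of_notMem hσ0]

/-- The Möbius function `μ(π, 1̂)` of the partition lattice, for `π` with `k` blocks. -/
def cumulantCoeff (R : Type*) [CommRing R] (k : ℕ) : R :=
  (-1) ^ (k - 1) * ((k - 1).factorial : R)

lemma cumulantCoeff_add_two (R : Type*) [CommRing R] (k : ℕ) :
    cumulantCoeff R (k + 2) + (k + 1) * cumulantCoeff R (k + 1) = 0 := by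
  rw [cumulantCoeff, cumulantCoeff, show k + 2 - 1 = k + 1 by omega, Nat.add_sub_cancel,
    Nat.factorial_succ]
  push_cast
  ring

theorem sum_setPartitions_prod_erase_eq_zero {R : Type*} [CommRing R] {S : Finset ℕ} {a : ℕ}
    (ha : a ∈ S) (hS : 2 ≤ S.card) (x : Finset ℕ → R) (hx : x ∅ = 1) :
    ∑ π ∈ setPartitions S, cumulantCoeff R π.card * ∏ V ∈ π, x (V.erase a) = 0 := by
  rw [← sum_fiberwise_of_maps_to fun π hπ =>
    mem_setPartitions.2 ((mem_setPartitions.1 hπ).eraseFromBlocks a)]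
  refine sum_eq_zero fun σ hσ => ?_
  replace hσ := mem_setPartitions.1 hσ
  have haσ : ∀ V ∈ σ, a ∉ V := fun V hV haV => notMem_erase a S (hσ.1 V hV haV)
  obtain ⟨k, hk⟩ : ∃ k, σ.card = k + 1 := by
    obtain ⟨b, hb⟩ : (S.erase a).Nonempty := by rw [← card_pos, card_erase_of_mem ha]; omega
    obtain ⟨V, ⟨hV, -⟩, -⟩ := hσ.2.2 b hb
    exact Nat.exists_eq_add_one.2 (card_pos.2 ⟨V, hV⟩)
  have hfibre := filter_eraseFromBlocks_eq ha hσ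
  have hpart : ∀ π ∈ insert (insert {a} σ) (σ.image fun V => insert (insert a V) (σ.erase V)),
      IsSetPartition S π := fun π hπ => mem_setPartitions.1 (mem_filter.1 (hfibre ▸ hπ)).1
  have hpartV : ∀ V ∈ σ, IsSetPartition S (insert (insert a V) (σ.erase V)) :=
    fun V hV => hpart _ (mem_insert_of_mem (mem_image_of_mem _ hV))
  have hnew : insert {a} σ ∉ σ.image fun V => insert (insert a V) (σ.erase V) := by
    simp only [mem_image, not_exists, not_and]
    intro V hV h
    have hsingle := (hpartV V hV).eq_of_mem_of_mem (h ▸ mem_insert_self _ _)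
      (mem_insert_self _ _) (mem_singleton_self a) (mem_insert_self a V)
    obtain ⟨b, hb⟩ := hσ.2.1 V hV
    have hba : b = a := mem_singleton.1 (hsingle ▸ mem_insert_of_mem hb)
    exact haσ V hV (hba ▸ hb)
  have hinj : Set.InjOn (fun V => insert (insert a V) (σ.erase V)) σ := by
    intro V hV W hW (h : insert (insert a V) (σ.erase V) = insert (insert a W) (σ.erase W))
    have := (hpartV W hW).eq_of_mem_of_mem (h ▸ mem_insert_self _ _) (mem_insert_self _ _)
      (mem_insert_self a V) (mem_insert_self a W)
    rw [← erase_insert (haσ V hV), this, erase_insert (haσ W hW)]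
  have hprod : ∏ V ∈ σ, x (V.erase a) = ∏ V ∈ σ, x V :=
    prod_congr rfl fun V hV => by rw [erase_eq_of_notMem (haσ V hV)]
  have hterm₀ : cumulantCoeff R (insert {a} σ).card * ∏ V ∈ insert {a} σ, x (V.erase a) =
      cumulantCoeff R (k + 2) * ∏ V ∈ σ, x V := by
    have h : {a} ∉ σ := fun h => haσ _ h (mem_singleton_self a)
    rw [card_insert_of_notMem h, prod_insert h, erase_singleton, hx, one_mul, hprod, hk]
  have htermV : ∀ V ∈ σ, cumulantCoeff R (insert (insert a V) (σ.erase V)).card *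
      ∏ W ∈ insert (insert a V) (σ.erase V), x (W.erase a) =
      cumulantCoeff R (k + 1) * ∏ V ∈ σ, x V := by
    intro V hV
    have h : insert a V ∉ σ.erase V := fun h => haσ _ (mem_of_mem_erase h) (mem_insert_self a V)
    rw [card_insert_of_notMem h, card_erase_add_one hV, prod_insert h, erase_insert (haσ V hV),
      prod_congr rfl fun W hW => by rw [erase_eq_of_notMem (haσ W (mem_of_mem_erase hW))],
      mul_prod_erase σ x hV, hk]
  rw [hfibre, sum_insert hnew, sum_image hinj, hterm₀, sum_congr rfl htermV, sum_const, hk,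
    nsmul_eq_mul, ← mul_assoc, ← add_mul]
  push_cast
  rw [cumulantCoeff_add_two, zero_mul]

section BlockProd

variable [Monoid 𝔘] {A : ℕ → 𝔘} {a : ℕ} {V : Finset ℕ}

lemma blockProd_empty : blockProd A ∅ = 1 := by
  simp [blockProd, blockList]

lemma blockProd_mem {M : Type*} [SetLike M 𝔘] [SubmonoidClass M 𝔘] {s : M}
    (hA : ∀ j, A j ∈ s) : blockProd A V ∈ s :=
  list_prod_mem fun _ hy => by
    obtain ⟨j, -, rfl⟩ := List.mem_map.1 hy
    exact hA j

lemma blockProd_update_of_notMem (X : 𝔘) (h : a ∉ V) :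
    blockProd (update A a X) V = blockProd A V := by
  rw [blockProd, blockList, List.map_congr_left fun b hb =>
    update_of_ne (ne_of_mem_of_not_mem ((mem_sort _).1 hb) h) X A]
  rfl

lemma blockProd_update_of_forall_le (X : 𝔘) (ha : a ∈ V) (hmin : ∀ b ∈ V, a ≤ b) :
    blockProd (update A a X) V = X * blockProd A (V.erase a) := by
  have hsort : V.sort (· ≤ ·) = a :: (V.erase a).sort (· ≤ ·) := by
    conv_lhs => rw [← insert_erase ha]
    exact sort_insert _ (fun b hb => hmin b (mem_of_mem_erase hb)) (notMem_erase a V)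
  rw [blockProd, blockList, hsort, List.map_cons, List.prod_cons, update_self, ← blockList,
    ← blockProd, blockProd_update_of_notMem X (notMem_erase a V)]

end BlockProd

section Cumulant

variable [Monoid 𝔘]

theorem cumulant_update_one_eq_zero {ω : 𝔘 → ℂ} (hω : ω 1 = 1) (A : ℕ → 𝔘) {S : Finset ℕ}
    {a : ℕ} (ha : a ∈ S) (hmin : ∀ b ∈ S, a ≤ b) (hS : 2 ≤ S.card) :
    cumulant ω (update A a 1) S = 0 := by
  rw [← sum_setPartitions_prod_erase_eq_zero ha hS (fun V => ω (blockProd A V))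
    (by rw [blockProd_empty, hω])]
  refine sum_congr rfl fun π hπ => congrArg _ (prod_congr rfl fun V hV => ?_)
  by_cases haV : a ∈ V
  · have hVS := (mem_setPartitions.1 hπ).1 V hV
    rw [blockProd_update_of_forall_le 1 haV fun b hb => hmin b (hVS hb), one_mul]
  · rw [blockProd_update_of_notMem 1 haV, erase_eq_of_notMem haV]

lemma IsSetPartition.prod_blockProd_update (ω : 𝔘 → ℂ) (A : ℕ → 𝔘) (X : 𝔘) {S : Finset ℕ}
    {π : Finset (Finset ℕ)} (hπ : IsSetPartition S π) {a : ℕ} {V₀ : Finset ℕ} (hV₀ : V₀ ∈ π)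
    (ha : a ∈ V₀) (hmin : ∀ b ∈ S, a ≤ b) :
    ∏ V ∈ π, ω (blockProd (update A a X) V) =
      ω (X * blockProd A (V₀.erase a)) * ∏ V ∈ π.erase V₀, ω (blockProd A V) := by
  rw [← mul_prod_erase π _ hV₀,
    blockProd_update_of_forall_le X ha fun b hb => hmin b (hπ.1 V₀ hV₀ hb)]
  refine congrArg _ (prod_congr rfl fun V hV => ?_)
  rw [blockProd_update_of_notMem X fun haV =>
    (mem_erase.1 hV).1 (hπ.eq_of_mem_of_mem (mem_of_mem_erase hV) hV₀ haV ha)]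

theorem tendsto_mul_cumulant_update_of_covariance {ι : Type*} {l : Filter ι} {ω : 𝔘 → ℂ}
    (hω : ω 1 = 1) (A : ℕ → 𝔘) {S : Finset ℕ} {a : ℕ} (ha : a ∈ S) (hmin : ∀ b ∈ S, a ≤ b)
    (hS : 2 ≤ S.card) (c : ι → ℂ) (X : ι → 𝔘)
    (hcov : ∀ V ⊆ S.erase a, Tendsto
      (fun i => c i * (ω (X i * blockProd A V) - ω (X i) * ω (blockProd A V))) l (𝓝 0)) :
    Tendsto (fun i => c i * cumulant ω (update A a (X i)) S) l (𝓝 0) := by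
  have hexpand : ∀ i, c i * cumulant ω (update A a (X i)) S =
      ∑ π ∈ setPartitions S, cumulantCoeff ℂ π.card * (c i *
        (∏ V ∈ π, ω (blockProd (update A a (X i)) V) -
          ω (X i) * ∏ V ∈ π, ω (blockProd (update A a 1) V))) := by
    intro i
    rw [← sub_zero (cumulant ω _ S), ← mul_zero (ω (X i)),
      ← cumulant_update_one_eq_zero hω A ha hmin hS]
    simp only [cumulant, mul_sum, ← sum_sub_distrib]
    exact sum_congr rfl fun π _ => by rw [cumulantCoeff]; ring
  rw [funext hexpand, ← sum_const_zero (s := setPartitions S)]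
  refine tendsto_finsetSum _ fun π hπ => ?_
  replace hπ := mem_setPartitions.1 hπ
  obtain ⟨V₀, ⟨hV₀, haV₀⟩, -⟩ := hπ.2.2 a ha
  simp only [hπ.prod_blockProd_update ω A _ hV₀ haV₀ hmin, one_mul]
  have := (hcov (V₀.erase a) (erase_subset_erase a (hπ.1 V₀ hV₀))).const_mul
    (cumulantCoeff ℂ π.card * ∏ V ∈ π.erase V₀, ω (blockProd A V))
  rw [mul_zero] at this
  exact this.congr fun i => by ring

end Cumulant

theorem classical_cumulant_rate_of_decay_general {G ι : Type*}
    [NormedRing 𝔘] [StarRing 𝔘] [NormedAlgebra ℂ 𝔘] [StarModule ℂ 𝔘]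
    (α : G → 𝔘 ≃⋆ₐ[ℂ] 𝔘)
    (ω : 𝔘 →ₗ[ℂ] ℂ) (hω : IsState ω)
    (l : Filter ι) (g : ι → G)
    (𝔙 : StarSubalgebra ℂ 𝔘) (f : G → ℝ)
    (hcl : ∀ A ∈ 𝔙, ∀ B ∈ 𝔙, Filter.Tendsto
      (fun i => (f (g i) : ℂ) * (ω (α (g i) A * B) - ω (α (g i) A) * ω B)) l (𝓝 0)) :
    ∀ n, 2 ≤ n → ∀ A : ℕ → 𝔘, (∀ j, A j ∈ 𝔙) →
      Filter.Tendsto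
        (fun i => (f (g i) : ℂ) *
          cumulant ⇑ω (Function.update A 1 (α (g i) (A 1))) (Finset.Icc 1 n))
        l (𝓝 0) := by
  intro n hn A hA
  have h1 : 1 ∈ Icc 1 n := mem_Icc.2 ⟨le_rfl, by omega⟩
  have hmin : ∀ b ∈ Icc 1 n, 1 ≤ b := fun b hb => (mem_Icc.1 hb).1
  have hcard : 2 ≤ (Icc 1 n).card := by rw [Nat.card_Icc]; omega
  exact tendsto_mul_cumulant_update_of_covariance hω.unital A h1 hmin hcard _ _ fun V _ =>
    hcl _ (hA 1) _ (blockProd_mem hA)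

/-- if the covariance is f(g)-clustering on a *-subalgebra 𝔙, then all higher
classical cumulants of elements of 𝔙 decay at least at the rate 1/f along the net. -/
theorem classical_cumulant_rate_of_decay {G ι : Type*} [Group G] [TopologicalSpace G] [IsTopologicalGroup G]
    [LocallyCompactSpace G]
    [NormedRing 𝔘] [StarRing 𝔘] [CStarRing 𝔘] [NormedAlgebra ℂ 𝔘] [StarModule ℂ 𝔘]
    [CompleteSpace 𝔘]
    (α : G → 𝔘 ≃⋆ₐ[ℂ] 𝔘) (hα : IsStarAutoRep α)
    (ω : 𝔘 →ₗ[ℂ] ℂ) (hω : IsState ω)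
    (l : Filter ι) (g : ι → G)
    (𝔙 : StarSubalgebra ℂ 𝔘) (f : G → ℝ) (hf : ∀ x : G, 0 < f x)
    (hcl : ∀ A ∈ 𝔙, ∀ B ∈ 𝔙, Filter.Tendsto
      (fun i => (f (g i) : ℂ) * (ω (α (g i) A * B) - ω (α (g i) A) * ω B)) l (𝓝 0)) :
    ∀ n, 2 ≤ n → ∀ A : ℕ → 𝔘, (∀ j, A j ∈ 𝔙) →
      Filter.Tendsto
        (fun i => (f (g i) : ℂ) *
          cumulant ⇑ω (Function.update A 1 (α (g i) (A 1))) (Finset.Icc 1 n))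
        l (𝓝 0) :=
  classical_cumulant_rate_of_decay_general α ω hω l g 𝔙 f hcl
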